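/- Let x = (X_1,…,X_k) be a sample generated by a stationary ergodic process distribution ρ_x, and let ρ_y be any stationary ergodic process distribution. Then, with probability 1, lim_{k→∞} d̂((X_1,…,X_k), ρ_y) = d(ρ_x, ρ_y) almost surely. -/

import Mathlib

/-!
Stationarity makes every shifted indicator `1_B ∘ shift^[i]` have mean `ρ(B)`, so every
frequency `freq B k n` with `k ≤ n` has mean `ρ(B)`. Frequencies lie in `[0, 1]`, so by dominated
convergence the almost sure limit that ergodicity provides is this mean. Since the cylinders are
countably many, almost surely all frequencies converge at once, and the weighted series `d̂`
then converges termwise with the summable domination `wt i`.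
-/

open MeasureTheory Filter Topology

namespace Paper

variable {A : Type*} [MeasurableSpace A]

/-- The left shift on one-sided infinite sequences. -/
def shift (x : ℕ → A) : ℕ → A := fun n => x (n + 1)

/-- A process distribution is stationary if it is invariant under the left shift. -/
def Stationary (ρ : Measure (ℕ → A)) : Prop := Measure.map shift ρ = ρ

/-- A set of sequences depends only on the first `k` coordinates. -/
def DependsOn (B : Set (ℕ → A)) (k : ℕ) : Prop :=
  ∀ x y : ℕ → A, (∀ i < k, x i = y i) → (x ∈ B ↔ y ∈ B)

/-- Empirical frequency `ν(X_{1..n}, B)` of the `k`-dimensional event `B` in the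
first `n` symbols of `x` (0 when `n < k`). -/
noncomputable def freq (B : Set (ℕ → A)) (k n : ℕ) (x : ℕ → A) : ℝ :=
  if k ≤ n then
    (∑ i ∈ Finset.range (n - k + 1), Set.indicator B (fun _ => (1 : ℝ)) fun j => x (i + j)) /
      ((n : ℝ) - k + 1)
  else 0

/-- Ergodicity: the empirical frequency of every finite-dimensional event converges
almost surely to a constant. -/
def ErgodicFreq (ρ : Measure (ℕ → A)) : Prop :=
  ∀ (k : ℕ) (B : Set (ℕ → A)), MeasurableSet B → DependsOn B k →
    ∃ c : ℝ, ∀ᵐ x ∂ρ, Tendsto (fun n => freq B k n x) atTop (𝓝 c)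

/-- A stationary ergodic process distribution. -/
def StatErg (ρ : Measure (ℕ → A)) : Prop :=
  IsProbabilityMeasure ρ ∧ Stationary ρ ∧ ErgodicFreq ρ

/-- A fixed sequence `(B_i)` of finite-dimensional cylinder events generating the Borel
σ-algebra of `A^∞`, with `dim i` the dimension of `B i`. -/
structure CylBasis (A : Type*) [MeasurableSpace A] where
  B : ℕ → Set (ℕ → A)
  dim : ℕ → ℕ
  dim_pos : ∀ i, 0 < dim i
  meas : ∀ i, MeasurableSet (B i)
  dep : ∀ i, DependsOn (B i) (dim i)
  gen : MeasurableSpace.generateFrom (Set.range B) = (inferInstance : MeasurableSpace (ℕ → A))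

/-- Weights `w_i = 1/(i(i+1))` (indexing from 0: `w_i = 1/((i+1)(i+2))`). -/
noncomputable def wt (i : ℕ) : ℝ := 1 / ((i + 1) * (i + 2))

/-- The distributional distance `d(ρ₁,ρ₂) = Σ_i w_i |ρ₁(B_i) − ρ₂(B_i)|`. -/
noncomputable def dd (𝓑 : CylBasis A) (ρ₁ ρ₂ : Measure (ℕ → A)) : ℝ :=
  ∑' i, wt i * |(ρ₁ (𝓑.B i)).toReal - (ρ₂ (𝓑.B i)).toReal|

/-- The empirical distributional distance `d̂` between the first `n` symbols of `x`
and the first `m` symbols of `y`. -/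
noncomputable def hatd2 (𝓑 : CylBasis A) (n m : ℕ) (x y : ℕ → A) : ℝ :=
  ∑' i, wt i * |freq (𝓑.B i) (𝓑.dim i) n x - freq (𝓑.B i) (𝓑.dim i) m y|


/-- The empirical distributional distance `d̂` between the first `n` symbols of a sample `x`
and a process distribution `ρ`. -/
noncomputable def hatd1 (𝓑 : CylBasis A) (n : ℕ) (x : ℕ → A) (ρ : Measure (ℕ → A)) : ℝ :=
  ∑' i, wt i * |freq (𝓑.B i) (𝓑.dim i) n x - (ρ (𝓑.B i)).toReal|

section

variable {ρ : Measure (ℕ → A)} {B : Set (ℕ → A)} {k n : ℕ}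

omit [MeasurableSpace A] in
lemma shift_iterate_apply (i : ℕ) (x : ℕ → A) : shift^[i] x = fun j => x (i + j) := by
  induction i generalizing x with
  | zero => funext j; simp
  | succ i ih =>
    rw [Function.iterate_succ_apply, ih]
    funext j
    simp only [shift]
    congr 1
    omega

lemma measurable_shift : Measurable (shift : (ℕ → A) → ℕ → A) :=
  measurable_pi_lambda _ fun j => measurable_pi_apply (j + 1)

lemma Stationary.measurePreserving (hρ : Stationary ρ) : MeasurePreserving shift ρ ρ :=
  ⟨measurable_shift, hρ⟩

omit [MeasurableSpace A] in
lemma freq_eq_sum_indicator (hkn : k ≤ n) (x : ℕ → A) :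
    freq B k n x =
      (∑ i ∈ Finset.range (n - k + 1), (shift^[i] ⁻¹' B).indicator (1 : (ℕ → A) → ℝ) x) /
        (n - k + 1 : ℕ) := by
  simp only [freq, if_pos hkn, Nat.cast_add, Nat.cast_sub hkn, Nat.cast_one]
  congr 1
  refine Finset.sum_congr rfl fun i _ => ?_
  classical
  rw [Set.indicator_apply, Set.indicator_apply, Set.mem_preimage, shift_iterate_apply]
  rfl

omit [MeasurableSpace A] in
lemma freq_mem_Icc (B : Set (ℕ → A)) (k n : ℕ) (x : ℕ → A) : freq B k n x ∈ Set.Icc 0 1 := by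
  by_cases hkn : k ≤ n
  · rw [freq_eq_sum_indicator hkn, Set.mem_Icc]
    have hsum : ∑ i ∈ Finset.range (n - k + 1), (shift^[i] ⁻¹' B).indicator (1 : (ℕ → A) → ℝ) x
        ≤ (n - k + 1 : ℕ) := by
      refine (Finset.sum_le_card_nsmul _ _ 1 fun i _ => ?_).trans_eq (by simp)
      exact Set.indicator_apply_le' (fun _ => le_rfl) fun _ => zero_le_one
    exact ⟨div_nonneg (Finset.sum_nonneg fun i _ => Set.indicator_nonneg (fun _ _ => zero_le_one) x)
      (Nat.cast_nonneg _), div_le_one_of_le₀ hsum (Nat.cast_nonneg _)⟩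
  · simp [freq, hkn]

lemma measurable_freq (hB : MeasurableSet B) (k n : ℕ) : Measurable (freq B k n) := by
  by_cases hkn : k ≤ n
  · rw [funext (freq_eq_sum_indicator (B := B) hkn)]
    exact (Finset.measurable_sum _ fun i _ =>
      measurable_const.indicator ((measurable_shift.iterate i) hB)).div_const _
  · unfold freq
    simp [hkn]

lemma integral_freq [IsProbabilityMeasure ρ] (hρ : Stationary ρ) (hB : MeasurableSet B)
    (hkn : k ≤ n) : ∫ x, freq B k n x ∂ρ = ρ.real B := by
  have hshift (i : ℕ) : MeasurableSet (shift^[i] ⁻¹' B) := (measurable_shift.iterate i) hB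
  simp_rw [freq_eq_sum_indicator hkn]
  rw [integral_div, integral_finsetSum _ fun i _ => (integrable_const 1).indicator (hshift i)]
  simp_rw [integral_indicator_one (hshift _), (hρ.measurePreserving.iterate _).measureReal_preimage
    hB.nullMeasurableSet]
  simp only [Finset.sum_const, Finset.card_range, nsmul_eq_mul]
  field_simp

lemma eq_measureReal_of_ae_tendsto_freq [IsProbabilityMeasure ρ] (hρ : Stationary ρ)
    (hB : MeasurableSet B) {c : ℝ}
    (hc : ∀ᵐ x ∂ρ, Tendsto (fun n => freq B k n x) atTop (𝓝 c)) : c = ρ.real B := by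
  have hint : Tendsto (fun n => ∫ x, freq B k n x ∂ρ) atTop (𝓝 c) := by
    simpa using tendsto_integral_of_dominated_convergence (fun _ => (1 : ℝ))
      (fun n => (measurable_freq hB k n).aestronglyMeasurable) (integrable_const 1)
      (fun n => ae_of_all _ fun x => abs_le.2 ⟨by linarith [(freq_mem_Icc B k n x).1],
        (freq_mem_Icc B k n x).2⟩) hc
  refine tendsto_nhds_unique hint (tendsto_const_nhds.congr' ?_)
  filter_upwards [eventually_ge_atTop k] with n hn
  exact (integral_freq hρ hB hn).symm

lemma StatErg.ae_tendsto_freq (hρ : StatErg ρ) (𝓑 : CylBasis A) :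
    ∀ᵐ x ∂ρ, ∀ i, Tendsto (fun n => freq (𝓑.B i) (𝓑.dim i) n x) atTop (𝓝 (ρ.real (𝓑.B i))) := by
  obtain ⟨_, hstat, herg⟩ := hρ
  rw [ae_all_iff]
  intro i
  obtain ⟨c, hc⟩ := herg (𝓑.dim i) (𝓑.B i) (𝓑.meas i) (𝓑.dep i)
  rwa [← eq_measureReal_of_ae_tendsto_freq hstat (𝓑.meas i) hc]

lemma wt_nonneg (i : ℕ) : 0 ≤ wt i := by
  unfold wt
  positivity

lemma summable_wt : Summable wt := by
  have hsq : Summable fun i : ℕ => 1 / ((i : ℝ) + 1) ^ 2 := by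
    simpa using (summable_nat_add_iff 1).2 (Real.summable_one_div_nat_pow.2 one_lt_two)
  refine hsq.of_nonneg_of_le wt_nonneg fun i => ?_
  unfold wt
  rw [sq]
  gcongr
  linarith

lemma tendsto_tsum_wt_mul_abs_sub {u : ℕ → ℕ → ℝ} {a b : ℕ → ℝ}
    (hu : ∀ n i, u n i ∈ Set.Icc 0 1) (hb : ∀ i, b i ∈ Set.Icc 0 1)
    (hlim : ∀ i, Tendsto (fun n => u n i) atTop (𝓝 (a i))) :
    Tendsto (fun n => ∑' i, wt i * |u n i - b i|) atTop (𝓝 (∑' i, wt i * |a i - b i|)) := by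
  refine tendsto_tsum_of_dominated_convergence summable_wt
    (fun i => ((hlim i).sub_const _).abs.const_mul _) (Eventually.of_forall fun n i => ?_)
  have hdiff : |u n i - b i| ≤ 1 :=
    abs_sub_le_of_nonneg_of_le (hu n i).1 (hu n i).2 (hb i).1 (hb i).2
  simpa [abs_of_nonneg (wt_nonneg i)] using mul_le_of_le_one_right (wt_nonneg i) hdiff

end

/-- If a sample is generated by a stationary ergodic process distribution
`ρx`, then for any stationary ergodic `ρy`, with probability 1 the empirical distributional
distance between the sample and `ρy` converges to `d(ρx,ρy)`. -/
theorem empirical_distance_to_measure_consistent (𝓑 : CylBasis A)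
    (ρx ρy : Measure (ℕ → A)) (hx : StatErg ρx) (hy : StatErg ρy) :
    ∀ᵐ x ∂ρx, Tendsto (fun k => hatd1 𝓑 k x ρy) atTop (𝓝 (dd 𝓑 ρx ρy)) := by
  have : IsProbabilityMeasure ρy := hy.1
  filter_upwards [hx.ae_tendsto_freq 𝓑] with x hfreq
  exact tendsto_tsum_wt_mul_abs_sub (fun n i => freq_mem_Icc _ _ n x)
    (fun i => ⟨measureReal_nonneg, measureReal_le_one⟩) hfreq

end Paper
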